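/- arXiv:2006.15546 — 3 statements merged into one kernel-verified Lean document; each statement's English description precedes it below -/
import Mathlib

section
/- Let (f,a) and (g,b) be elements of the partial wreath product IS_m ≀_p IS_n. Then (f,a) R (g,b) (Green's R-relation) if and only if dom(a) = dom(b) and for every z ∈ dom(a) one has f(z) R g(z) in IS_m, i.e. dom(f(z)) = dom(g(z)). -/
open scoped Classical

/-- `IS n` is the full inverse symmetric semigroup: all partial bijections of `Fin n`;
multiplication is composition of partial maps (maps acting on the right). -/
abbrev IS (n : ℕ) : Type := PEquiv (Fin n) (Fin n)

noncomputable section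
namespace ISW

instance {n : ℕ} : Mul (IS n) := ⟨PEquiv.trans⟩
instance {n : ℕ} : One (IS n) := ⟨PEquiv.refl _⟩

/-- The domain of a partial bijection. -/
def pdom {n : ℕ} (f : IS n) : Set (Fin n) := {x | (f x).isSome}

/-- The range of a partial bijection. -/
def pran {n : ℕ} (f : IS n) : Set (Fin n) := {y | (f.symm y).isSome}

/-- Green's R-relation on a semigroup (with identity): `u R v` iff `uS = vS`. -/
def GreenR {S : Type*} [Mul S] (u v : S) : Prop :=
  {w | ∃ s, w = u * s} = {w | ∃ s, w = v * s}

/-- Green's L-relation on a semigroup (with identity): `u L v` iff `Su = Sv`. -/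
def GreenL {S : Type*} [Mul S] (u v : S) : Prop :=
  {w | ∃ s, w = s * u} = {w | ∃ s, w = s * v}

/-- An R-cross-section: a subsemigroup containing exactly one element of every
Green R-class. -/
def IsRCrossSection {S : Type*} [Mul S] (T : Set S) : Prop :=
  (∀ a ∈ T, ∀ b ∈ T, a * b ∈ T) ∧ ∀ x : S, ∃! t, t ∈ T ∧ GreenR x t

/-- An L-cross-section: a subsemigroup containing exactly one element of every
Green L-class. -/
def IsLCrossSection {S : Type*} [Mul S] (T : Set S) : Prop :=
  (∀ a ∈ T, ∀ b ∈ T, a * b ∈ T) ∧ ∀ x : S, ∃! t, t ∈ T ∧ GreenL x t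

/-- `φ` realizes a semigroup isomorphism from `T₁` onto `T₂`. -/
def IsSemiIso {S₁ S₂ : Type*} [Mul S₁] [Mul S₂] (T₁ : Set S₁) (T₂ : Set S₂)
    (φ : S₁ → S₂) : Prop :=
  Set.BijOn φ T₁ T₂ ∧ ∀ a ∈ T₁, ∀ b ∈ T₁, φ (a * b) = φ a * φ b

/-- The partial wreath product `IS m ≀_p IS n`: pairs `(f, a)` with `a ∈ IS n` and
`f` a partial map from `Fin n` to `IS m` whose domain equals the domain of `a`. -/
structure PW (m n : ℕ) where
  base : IS n
  fib : Fin n → Option (IS m)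
  dom_eq : ∀ x, (fib x).isSome ↔ (base x).isSome

/-- Multiplication of the partial wreath product: `(f,a)·(g,b) = (f g^a, ab)`. -/
instance {m n : ℕ} : Mul (PW m n) where
  mul u v :=
    { base := u.base * v.base
      fib := fun x => Option.map₂ (· * ·) (u.fib x) ((u.base x).bind v.fib)
      dom_eq := by
        intro x
        show _ ↔ (((u.base x).bind v.base)).isSome
        cases h : u.base x with
        | none =>
          have : u.fib x = none := by
            have := (u.dom_eq x)
            simp [h] at this
            simpa using Option.not_isSome_iff_eq_none.mp (by simp [this])
          simp [h, this, Option.map₂]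
        | some y =>
          have hf : (u.fib x).isSome := (u.dom_eq x).mpr (by simp [h])
          obtain ⟨s, hs⟩ := Option.isSome_iff_exists.mp hf
          cases h2 : v.base y with
          | none =>
            have : v.fib y = none := by
              have := (v.dom_eq y)
              simp [h2] at this
              simpa using Option.not_isSome_iff_eq_none.mp (by simp [this])
            simp [h, h2, hs, this, Option.map₂]
          | some z =>
            have hg : (v.fib y).isSome := (v.dom_eq y).mpr (by simp [h2])
            obtain ⟨t, ht⟩ := Option.isSome_iff_exists.mp hg
            simp [h, h2, hs, ht, Option.map₂] }

/-- The identity of the partial wreath product. -/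
instance {m n : ℕ} : One (PW m n) where
  one :=
    { base := 1
      fib := fun _ => some 1
      dom_eq := by intro x; simp; rfl }

/-- `chainFun L j x`: with `L` listing the elements of a block in increasing order and
`0 ≤ j < |L|` (`j` is the 0-based version of the paper's index), this is the value at `x` of
the chain `a_{i,j}`: the partial bijection with domain everything except `L[j]`,
sending `L[l] ↦ L[l+1]` for `l < j` and fixing all other points. -/
def chainFun {n : ℕ} (L : List (Fin n)) (j : ℕ) (x : Fin n) : Option (Fin n) :=
  if x ∈ L then
    if L.idxOf x = j then none
    else if L.idxOf x < j then L[L.idxOf x + 1]?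
    else some x
  else some x

/-- The generators `a_{i,j}` attached to an ordered decomposition with blocks `B i`. -/
def RGens {n s : ℕ} (B : Fin s → List (Fin n)) : Set (IS n) :=
  {a : IS n | ∃ i : Fin s, ∃ j : ℕ, j < (B i).length ∧ ∀ x, a x = chainFun (B i) j x}

/-- `R(M⃗₁, …, M⃗ₛ)`: the subsemigroup of `IS n` generated by the chains `a_{i,j}`
together with the identity map. -/
def RSec {n s : ℕ} (B : Fin s → List (Fin n)) : Set (IS n) :=
  (Subsemigroup.closure (RGens B ∪ {1}) : Subsemigroup (IS n))

/-- A decomposition of `Fin n` into disjoint nonempty blocks, each block equipped with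
a linear order, recorded by listing the elements of each block in increasing order. -/
structure OrderedPartition (n s : ℕ) where
  B : Fin s → List (Fin n)
  nonempty : ∀ i, B i ≠ []
  nodup : ∀ i, (B i).Nodup
  disjoint : ∀ i j, i ≠ j → ∀ x, x ∈ B i → x ∉ B j
  cover : ∀ x, ∃ i, x ∈ B i

/-- The chain `a_{i,j}` of the block listed by `L`, viewed inside `IS(M_i)`, i.e. embedded
into `IS n` as a partial bijection whose domain is contained in the block: it is defined on
`L` minus `L[j]`, sends `L[l] ↦ L[l+1]` for `l < j` and fixes the other points of `L`. -/
def chainFunB {n : ℕ} (L : List (Fin n)) (j : ℕ) (x : Fin n) : Option (Fin n) :=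
  if x ∈ L then
    if L.idxOf x = j then none
    else if L.idxOf x < j then L[L.idxOf x + 1]?
    else some x
  else none

/-- The generators of `R(M⃗)` inside `IS(M)` (embedded in `IS n`), `M` listed by `L`. -/
def BlockGens {n : ℕ} (L : List (Fin n)) : Set (IS n) :=
  {a : IS n | ∃ j : ℕ, j < L.length ∧ ∀ x, a x = chainFunB L j x}

/-- The identity of `IS(M)` (embedded in `IS n`): the identity map of the block listed by `L`. -/
def idOn {n : ℕ} (L : List (Fin n)) : Set (IS n) :=
  {a : IS n | ∀ x, a x = if x ∈ L then some x else none}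

/-- The R-cross-section `R(M⃗)` of `IS(M)`, embedded into `IS n`, for the block listed by `L`. -/
def RSecBlock {n : ℕ} (L : List (Fin n)) : Set (IS n) :=
  (Subsemigroup.closure (BlockGens L ∪ idOn L) : Subsemigroup (IS n))

/-- The wreath product `R_i ≀_p R(M⃗_i)` where `R(M⃗_i) ⊆ IS(M_i)`, `M_i` listed by `L`,
and `R_i = T ⊆ IS m`, realized inside `PW m n` via the natural embedding
`IS m ≀_p IS(M_i) ⊆ IS m ≀_p IS n`. -/
def WBlock (m n : ℕ) (L : List (Fin n)) (T : Set (IS m)) : Set (PW m n) :=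
  {u : PW m n | u.base ∈ RSecBlock L ∧ ∀ x f, u.fib x = some f → f ∈ T}

/-- The element `e' = (0̄, 1)` of `IS m ≀_p IS n`: the second component is the identity of
`IS n` and the first component sends every point to the empty map `0` of `IS m`. -/
def ezero (m n : ℕ) : PW m n where
  base := 1
  fib := fun _ => some ⊥
  dom_eq := by intro x; simp; rfl

/-!
The wreath product is a monoid, so `u R v` holds iff each of `u`, `v` is a right multiple of the
other. Right divisibility `v ∣ u` is characterised by domain inclusions, on the base and in every
fibre: necessity is read off the product formula, since `dom (a b) ⊆ dom a` in `IS n`; for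
sufficiency `u = v (v⁻¹ u)`, because `g (g⁻¹ f) = f` in `IS n` as soon as `dom f ⊆ dom g`.
-/

theorem greenR_iff_dvd {S : Type*} [Monoid S] (u v : S) : GreenR u v ↔ v ∣ u ∧ u ∣ v := by
  change {w | u ∣ w} = {w | v ∣ w} ↔ _
  refine ⟨fun h => ⟨(Set.ext_iff.mp h u).mp dvd_rfl, (Set.ext_iff.mp h v).mpr dvd_rfl⟩, ?_⟩
  rintro ⟨hvu, huv⟩
  ext w
  exact ⟨hvu.trans, huv.trans⟩

namespace IS

variable {n : ℕ}

theorem mul_apply (a b : IS n) (x : Fin n) : (a * b) x = (a x).bind b := rfl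

theorem one_apply (x : Fin n) : (1 : IS n) x = some x := rfl

instance : Monoid (IS n) where
  mul := (· * ·)
  one := 1
  mul_assoc := PEquiv.trans_assoc
  one_mul := PEquiv.refl_trans
  mul_one := PEquiv.trans_refl

theorem pdom_mul_subset (a b : IS n) : pdom (a * b) ⊆ pdom a := fun x hx => by
  cases h : a x <;> simp_all [pdom, mul_apply]

theorem mul_symm_mul_of_pdom_subset {f g : IS n} (h : pdom f ⊆ pdom g) :
    g * (g.symm * f) = f := by
  ext x y
  rw [mul_apply]
  cases hg : g x with
  | none =>
    have : x ∉ pdom f := fun hx => by simpa [pdom, hg] using h hx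
    simp_all [pdom]
  | some z => simp [mul_apply, (PEquiv.eq_some_iff g).mpr hg]

end IS

namespace PW

variable {m n : ℕ}

attribute [ext] PW

theorem fib_eq_none_iff (u : PW m n) (x : Fin n) : u.fib x = none ↔ u.base x = none := by
  simpa only [Option.not_isSome_iff_eq_none] using (u.dom_eq x).not

theorem base_mul (u v : PW m n) : (u * v).base = u.base * v.base := rfl

theorem fib_one (x : Fin n) : (1 : PW m n).fib x = some 1 := rfl

theorem fib_mul (u v : PW m n) (x : Fin n) :
    (u * v).fib x = Option.map₂ (· * ·) (u.fib x) ((u.base x).bind v.fib) := rfl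

theorem fib_mul_of_base_eq_some {u : PW m n} {x y : Fin n} (h : u.base x = some y) (v : PW m n) :
    (u * v).fib x = Option.map₂ (· * ·) (u.fib x) (v.fib y) := by
  rw [fib_mul, h, Option.bind_some]

theorem fib_mul_of_base_eq_none {u : PW m n} {x : Fin n} (h : u.base x = none) (v : PW m n) :
    (u * v).fib x = none := by
  rw [fib_mul, (fib_eq_none_iff u x).mpr h, Option.map₂_none_left]

instance : Monoid (PW m n) where
  mul := (· * ·)
  one := 1
  mul_assoc u v w := by
    ext1
    · exact mul_assoc u.base v.base w.base
    funext x
    cases hu : u.base x with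
    | none => simp only [fib_mul_of_base_eq_none, hu, base_mul, IS.mul_apply, Option.bind_none]
    | some y =>
      have huv : (u * v).base x = v.base y := by rw [base_mul, IS.mul_apply, hu, Option.bind_some]
      rw [fib_mul, huv, fib_mul_of_base_eq_some hu, fib_mul_of_base_eq_some hu, fib_mul]
      exact Option.map₂_assoc mul_assoc
  one_mul u := by
    ext1
    · exact one_mul u.base
    funext x
    rw [fib_mul_of_base_eq_some (IS.one_apply x)]
    cases u.fib x <;> simp [fib_one]
  mul_one u := by
    ext1
    · exact mul_one u.base
    funext x
    cases hu : u.base x with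
    | none => rw [fib_mul_of_base_eq_none hu, (fib_eq_none_iff u x).mpr hu]
    | some y =>
      rw [fib_mul_of_base_eq_some hu]
      cases u.fib x <;> simp [fib_one]

instance : Inv (PW m n) where
  inv v :=
    { base := v.base.symm
      fib := fun y => (v.base.symm y).bind fun x => (v.fib x).map PEquiv.symm
      dom_eq := by
        intro y
        cases hy : v.base.symm y with
        | none => simp
        | some x =>
          have hx : (v.fib x).isSome :=
            (v.dom_eq x).mpr (by simp [(PEquiv.eq_some_iff v.base).mp hy])
          simpa using hx }

theorem fib_inv_of_base_eq_some {v : PW m n} {x y : Fin n} (h : v.base x = some y) :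
    v⁻¹.fib y = (v.fib x).map PEquiv.symm := by
  change (v.base.symm y).bind _ = _
  rw [(PEquiv.eq_some_iff v.base).mpr h, Option.bind_some]

theorem mul_inv_mul_of_pdom_subset {u v : PW m n} (hbase : pdom u.base ⊆ pdom v.base)
    (hfib : ∀ x f g, u.fib x = some f → v.fib x = some g → pdom f ⊆ pdom g) :
    v * (v⁻¹ * u) = u := by
  ext1
  · exact IS.mul_symm_mul_of_pdom_subset hbase
  funext x
  cases hv : v.base x with
  | none =>
    have hu : u.base x = none := by
      simpa [pdom, hv] using mt (@hbase x)
    rw [fib_mul_of_base_eq_none hv, (fib_eq_none_iff u x).mpr hu]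
  | some y =>
    obtain ⟨g, hg⟩ := Option.isSome_iff_exists.mp ((v.dom_eq x).mpr (by simp [hv]))
    rw [fib_mul_of_base_eq_some hv, fib_mul_of_base_eq_some ((PEquiv.eq_some_iff v.base).mpr hv),
      fib_inv_of_base_eq_some hv, hg]
    cases hu : u.fib x with
    | none => rfl
    | some f =>
      simp only [Option.map_some, Option.map₂_some_some]
      rw [IS.mul_symm_mul_of_pdom_subset (hfib x f g hu hg)]

theorem dvd_iff {u v : PW m n} :
    v ∣ u ↔ pdom u.base ⊆ pdom v.base ∧
      ∀ x f g, u.fib x = some f → v.fib x = some g → pdom f ⊆ pdom g := by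
  constructor
  · rintro ⟨s, rfl⟩
    refine ⟨IS.pdom_mul_subset _ _, fun x f g hf hg => ?_⟩
    rw [fib_mul, hg] at hf
    obtain ⟨g', h, hg', -, rfl⟩ := Option.map₂_eq_some_iff.mp hf
    cases hg'
    exact IS.pdom_mul_subset g h
  · rintro ⟨hbase, hfib⟩
    exact ⟨v⁻¹ * u, (mul_inv_mul_of_pdom_subset hbase hfib).symm⟩

end PW

/-- `(f,a) R (g,b)` in `IS m ≀_p IS n` iff `dom a = dom b` and
`dom (f z) = dom (g z)` for every `z ∈ dom a`. -/
theorem greenR_wreath_iff (m n : ℕ) (u v : PW m n) :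
    GreenR u v ↔
      (pdom u.base = pdom v.base ∧
        ∀ z : Fin n, (u.base z).isSome →
          ∀ f g : IS m, u.fib z = some f → v.fib z = some g → pdom f = pdom g) := by
  have base_isSome {z f} (hf : u.fib z = some f) : (u.base z).isSome :=
    (u.dom_eq z).mp (Option.isSome_of_mem hf)
  rw [greenR_iff_dvd, PW.dvd_iff, PW.dvd_iff]
  constructor
  · rintro ⟨⟨hvu, hfib_vu⟩, huv, hfib_uv⟩
    exact ⟨hvu.antisymm huv,
      fun z _ f g hf hg => (hfib_vu z f g hf hg).antisymm (hfib_uv z g f hg hf)⟩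
  · rintro ⟨hdom, hfib⟩
    exact ⟨⟨hdom.subset, fun z f g hf hg => (hfib z (base_isSome hf) f g hf hg).subset⟩,
      hdom.symm.subset, fun z g f hg hf => (hfib z (base_isSome hf) f g hf hg).symm.subset⟩

end ISW
end
end

section
/- Every R-cross-section of IS_n is of the form R(M⃗_1, M⃗_2, …, M⃗_s) for some decomposition N_n = M_1 ⊔ M_2 ⊔ … ⊔ M_s into nonempty blocks and some linear orders on the elements of every block. -/
/-!
Write `gen y` for the element of `T` with domain `{y}ᶜ`. Elements of `T` are determined by their
domains, so `T` is generated by `1` and the `gen y`, and two facts drive the argument: if the range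
of `u ∈ T` lies in the domain of `v ∈ T`, then `u * v = u`, so `v` fixes the range of `u`; and a
point at which all powers of `u ∈ T` are defined is fixed by `u`.

The backward orbit of `y` under `g = gen y` is a list `L` ending at `y` along which `g` shifts
forward, and `g` fixes every other point. For `k < |L|`, `gen L[k]` fixes the range of
`g ^ (k + 1)`, and comparing domains gives `gen L[k] * g ^ (|L| - 1 - k) = g ^ (|L| - k)`; hence
`gen L[k]` is the shift along `L[0], …, L[k]`. Distinct points cannot have the same predecessor,
so two such chains through a common point are nested. The maximal chains are the ordered blocks,
and the `gen y` are exactly the generators `a_{i,j}`.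
-/

open scoped Classical

noncomputable section
namespace ISW

theorem getElem?_succ_ne_head? {α : Type*} {L : List α} (hL : L.Nodup) (hne : L ≠ [])
    (i : ℕ) : L[i + 1]? ≠ L.head? := by
  obtain _ | ⟨a, L⟩ := L
  · exact absurd rfl hne
  exact fun h => (List.nodup_cons.1 hL).1 (List.mem_of_getElem? (List.getElem?_cons_succ ▸ h))

theorem getElem_mem_take_iff {α : Type*} [DecidableEq α] {L : List α} (hL : L.Nodup) {l : ℕ}
    (hl : l < L.length) (m : ℕ) : L[l] ∈ L.take m ↔ l < m := by
  rw [List.mem_take_iff_idxOf_lt (List.getElem_mem hl), hL.idxOf_getElem]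

theorem prefix_or_prefix_of_take_eq {α : Type*} {A B : List α} {i : ℕ} (hiA : i ≤ A.length)
    (hiB : i ≤ B.length) (hbase : A.take i = B.take i)
    (hstep : ∀ p, i ≤ p → (hpA : p < A.length) → (hpB : p < B.length) →
      A.take p = B.take p → A[p] = B[p]) :
    A <+: B ∨ B <+: A := by
  have htake : ∀ p, i ≤ p → p ≤ A.length → p ≤ B.length → A.take p = B.take p := by
    intro p hp
    induction p, hp using Nat.le_induction with
    | base => exact fun _ _ => hbase
    | succ p hp ih =>
      intro hpA hpB
      have h := ih (by omega) (by omega)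
      rw [List.take_succ_eq_append_getElem hpA, List.take_succ_eq_append_getElem hpB, h,
        hstep p hp hpA hpB h]
  rcases le_total A.length B.length with hAB | hBA
  · left
    simpa [List.prefix_iff_eq_take] using htake A.length hiA le_rfl hAB
  · right
    simpa [List.prefix_iff_eq_take] using (htake B.length hiB hBA le_rfl).symm

section Shift
variable {α : Type*} [DecidableEq α]

def shiftFun (L : List α) (x : α) : Option α :=
  if x ∈ L then L[L.idxOf x + 1]? else some x

theorem shiftFun_getElem {L : List α} (hL : L.Nodup) {i : ℕ} (hi : i < L.length) :
    shiftFun L L[i] = L[i + 1]? := by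
  rw [shiftFun, if_pos (List.getElem_mem hi), hL.idxOf_getElem]

theorem shiftFun_of_not_mem {L : List α} {x : α} (hx : x ∉ L) : shiftFun L x = some x :=
  if_neg hx

theorem shiftFun_cons_of_ne {a x : α} (L : List α) (hx : x ≠ a) :
    shiftFun (a :: L) x = shiftFun L x := by
  simp [shiftFun, hx, List.idxOf_cons_ne L (Ne.symm hx)]

theorem shiftFun_ne_some_self {L : List α} (hL : L.Nodup) {x : α} (hx : x ∈ L) :
    shiftFun L x ≠ some x := by
  obtain ⟨i, hi, rfl⟩ := List.getElem_of_mem hx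
  rw [shiftFun_getElem hL hi, Ne, List.getElem?_eq_some_iff]
  rintro ⟨h, hii⟩
  exact absurd ((hL.getElem_inj_iff).1 hii) (by omega)

theorem shiftFun_ne_some_head {a : α} {L : List α} (hL : (a :: L).Nodup) (x : α) :
    shiftFun (a :: L) x ≠ some a := by
  by_cases hx : x ∈ a :: L
  · obtain ⟨i, hi, rfl⟩ := List.getElem_of_mem hx
    rw [shiftFun_getElem hL hi]
    exact getElem?_succ_ne_head? hL (List.cons_ne_nil a L) i
  · rw [shiftFun_of_not_mem hx, Ne, Option.some_inj]
    rintro rfl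
    exact hx List.mem_cons_self

theorem mem_of_shiftFun_eq {L L' : List α} (hL : L.Nodup) (h : shiftFun L = shiftFun L')
    {x : α} (hx : x ∈ L) : x ∈ L' := by
  by_contra hx'
  exact shiftFun_ne_some_self hL hx (by rw [h, shiftFun_of_not_mem hx'])

theorem eq_of_shiftFun_eq {L L' : List α} (hL : L.Nodup) (hL' : L'.Nodup)
    (h : shiftFun L = shiftFun L') : L = L' := by
  induction L generalizing L' with
  | nil =>
    rcases L' with _ | ⟨a', R'⟩
    · rfl
    · exact absurd (mem_of_shiftFun_eq hL' h.symm List.mem_cons_self) List.not_mem_nil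
  | cons a R ih =>
    obtain ⟨j, hj, hja⟩ := List.getElem_of_mem (mem_of_shiftFun_eq hL h List.mem_cons_self)
    rcases L' with _ | ⟨a', R'⟩
    · exact absurd hj (by simp)
    obtain rfl : a = a' := by
      rcases j with _ | j
      · exact hja.symm
      · refine absurd ?_ (shiftFun_ne_some_head hL (a' :: R')[j])
        rw [h, shiftFun_getElem hL' (by omega), List.getElem?_eq_getElem hj, hja]
    have hR : shiftFun R = shiftFun R' := funext fun x => by
      by_cases hx : x = a
      · subst hx
        rw [shiftFun_of_not_mem (List.nodup_cons.1 hL).1,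
          shiftFun_of_not_mem (List.nodup_cons.1 hL').1]
      · rw [← shiftFun_cons_of_ne R hx, ← shiftFun_cons_of_ne R' hx, h]
    rw [ih (List.nodup_cons.1 hL).2 (List.nodup_cons.1 hL').2 hR]

theorem chainFun_eq_shiftFun_take {n : ℕ} (L : List (Fin n)) (j : ℕ) :
    chainFun L j = shiftFun (L.take (j + 1)) := by
  funext x
  by_cases hx : x ∈ L
  · by_cases hlt : L.idxOf x < j + 1
    · have hmem : x ∈ L.take (j + 1) := (List.mem_take_iff_idxOf_lt hx).2 hlt
      rw [chainFun, shiftFun, if_pos hx, if_pos hmem,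
        ((L.take_prefix _).idxOf_eq_of_mem hmem), List.getElem?_take]
      split_ifs <;> first | rfl | omega
    · have hmem : x ∉ L.take (j + 1) := fun h => hlt ((List.mem_take_iff_idxOf_lt hx).1 h)
      rw [chainFun, shiftFun, if_pos hx, if_neg hmem, if_neg (by omega), if_neg (by omega)]
  · rw [chainFun, shiftFun, if_neg hx, if_neg fun h => hx (List.mem_of_mem_take h)]

end Shift

section PartialBijections
variable {n : ℕ}

instance : Monoid (IS n) where
  mul_assoc := PEquiv.trans_assoc
  one_mul := PEquiv.refl_trans
  mul_one := PEquiv.trans_refl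

instance : Finite (IS n) :=
  Finite.of_injective (fun u : IS n => (u : Fin n → Option (Fin n))) fun _ _ h =>
    PEquiv.ext (congrFun h)

@[simp] theorem mul_apply (u v : IS n) (x : Fin n) : (u * v) x = (u x).bind v := rfl

@[simp] theorem one_apply (x : Fin n) : (1 : IS n) x = some x := rfl

theorem mem_pdom_iff {u : IS n} {x : Fin n} : x ∈ pdom u ↔ ∃ w, u x = some w :=
  Option.isSome_iff_exists

theorem not_mem_pdom_iff {u : IS n} {x : Fin n} : x ∉ pdom u ↔ u x = none := by
  simp [pdom]

theorem mem_pran_iff {u : IS n} {w : Fin n} : w ∈ pran u ↔ ∃ x, u x = some w := by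
  simp only [pran, Set.mem_ofPred_eq, Option.isSome_iff_exists, PEquiv.eq_some_iff]

theorem mem_pdom_mul_iff {u v : IS n} {x : Fin n} :
    x ∈ pdom (u * v) ↔ ∃ w, u x = some w ∧ w ∈ pdom v := by
  simp only [mem_pdom_iff, mul_apply, Option.bind_eq_some_iff]
  exact ⟨fun ⟨z, w, hw, hz⟩ => ⟨w, hw, z, hz⟩,
    fun ⟨w, hw, z, hz⟩ => ⟨z, w, hw, hz⟩⟩

theorem pdom_mul_subset (u v : IS n) : pdom (u * v) ⊆ pdom u := fun _ hx =>
  let ⟨w, hw, _⟩ := mem_pdom_mul_iff.1 hx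
  mem_pdom_iff.2 ⟨w, hw⟩

theorem pdom_ofSet (D : Set (Fin n)) : pdom (PEquiv.ofSet D : IS n) = D := by
  ext x
  simp [pdom, PEquiv.ofSet]

theorem apply_inj (u : IS n) {x x' w : Fin n} (h : u x = some w) (h' : u x' = some w) :
    x = x' :=
  PEquiv.inj u h h'

theorem setOf_exists_eq_mul (u : IS n) : {w | ∃ s, w = u * s} = {w | pdom w ⊆ pdom u} := by
  ext w
  refine ⟨?_, fun hw => ⟨u.symm * w, PEquiv.ext fun x => ?_⟩⟩
  · rintro ⟨s, rfl⟩
    exact pdom_mul_subset u s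
  · cases hx : u x with
    | none => simpa [hx] using not_mem_pdom_iff.1 fun h => not_mem_pdom_iff.2 hx (hw h)
    | some y => simp [hx, u.eq_some_iff.2 hx]

theorem greenR_iff (u v : IS n) : GreenR u v ↔ pdom u = pdom v := by
  rw [GreenR, setOf_exists_eq_mul, setOf_exists_eq_mul]
  refine ⟨fun h => subset_antisymm ?_ ?_, fun h => by rw [h]⟩
  · have hu : u ∈ {w : IS n | pdom w ⊆ pdom u} := Set.Subset.rfl
    rwa [h] at hu
  · have hv : v ∈ {w : IS n | pdom w ⊆ pdom v} := Set.Subset.rfl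
    rwa [← h] at hv

end PartialBijections

section ShiftPow
variable {n : ℕ} {u : IS n} {L : List (Fin n)}

theorem pow_apply_getElem (hu : ⇑u = shiftFun L) (hL : L.Nodup) (t : ℕ) {i : ℕ}
    (hi : i < L.length) : (u ^ t) L[i] = L[i + t]? := by
  induction t with
  | zero => simp [List.getElem?_eq_getElem hi]
  | succ t ih =>
    rw [pow_succ, mul_apply, ih]
    by_cases h : i + t < L.length
    · rw [List.getElem?_eq_getElem h, Option.bind_some, hu, shiftFun_getElem hL h, add_assoc]
    · rw [List.getElem?_eq_none (by omega), List.getElem?_eq_none (by omega), Option.bind_none]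

theorem pow_apply_of_not_mem (hu : ⇑u = shiftFun L) {x : Fin n} (hx : x ∉ L) (t : ℕ) :
    (u ^ t) x = some x := by
  induction t with
  | zero => rfl
  | succ t ih => rw [pow_succ, mul_apply, ih, Option.bind_some, hu, shiftFun_of_not_mem hx]

end ShiftPow

section Chains
variable {n : ℕ}

/-- At the last index `L[i + 1]?` is `none`, so `u y = none`. -/
def IsChainTo (u : IS n) (L : List (Fin n)) (y : Fin n) : Prop :=
  L.Nodup ∧ L.getLast? = some y ∧ ∀ i (hi : i < L.length), u L[i] = L[i + 1]?

theorem IsChainTo.exists_head_not_mem_pran {u : IS n} {L : List (Fin n)} {y : Fin n}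
    (hL : IsChainTo u L y) : ∃ L', IsChainTo u L' y ∧ ∀ x, u x ≠ L'.head? := by
  by_cases hhead : ∀ x, u x ≠ L.head?
  · exact ⟨L, hL, hhead⟩
  obtain ⟨x, hx⟩ : ∃ x, u x = L.head? := by simpa using hhead
  obtain ⟨hnd, hlast, hstep⟩ := hL
  have hne : L ≠ [] := by
    rintro rfl
    simp at hlast
  have hxL : x ∉ L := fun hmem => by
    obtain ⟨i, hi, rfl⟩ := List.getElem_of_mem hmem
    exact getElem?_succ_ne_head? hnd hne i ((hstep i hi).symm.trans hx)
  have hnd' : (x :: L).Nodup := List.nodup_cons.2 ⟨hxL, hnd⟩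
  have hlen : L.length + 1 ≤ n := by simpa using hnd'.length_le_card
  have : n - (L.length + 1) < n - L.length := by omega
  refine IsChainTo.exists_head_not_mem_pran
    ⟨hnd', by rw [List.getLast?_cons, hlast]; rfl, ?_⟩
  rintro (_ | i) hi
  · simpa [List.head?_eq_getElem?] using hx
  · simpa using hstep i (by simpa using hi)
termination_by n - L.length

theorem exists_isChainTo {u : IS n} {y : Fin n} (hy : u y = none) :
    ∃ L, IsChainTo u L y ∧ ∀ x, u x ≠ L.head? :=
  IsChainTo.exists_head_not_mem_pran ⟨List.nodup_singleton y, rfl, by simp [hy]⟩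

end Chains

theorem exists_mem_pdom_eq_of_forall_compl_singleton {n : ℕ} (S : Subsemigroup (IS n))
    (h1 : 1 ∈ S) (hS : ∀ y, ∃ g ∈ S, pdom g = {y}ᶜ) (D : Set (Fin n)) :
    ∃ w ∈ S, pdom w = D := by
  suffices ∀ C : Finset (Fin n), ∃ w ∈ S, pdom w = (↑C)ᶜ by simpa using this Dᶜ.toFinset
  intro C
  induction C using Finset.induction_on with
  | empty => exact ⟨1, h1, by ext; simp [pdom]⟩
  | insert x C hx ih =>
    obtain ⟨w, hwS, hw⟩ := ih
    obtain ⟨y, hy⟩ := mem_pdom_iff.1 (show x ∈ pdom w by simpa [hw])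
    obtain ⟨g, hgS, hg⟩ := hS y
    refine ⟨w * g, S.mul_mem hwS hgS, Set.ext fun x' => ?_⟩
    simp only [mem_pdom_mul_iff, hg, Finset.coe_insert, Set.mem_compl_iff, Set.mem_insert_iff,
      Set.mem_singleton_iff, not_or, Finset.mem_coe]
    constructor
    · rintro ⟨w', hw', hne⟩
      refine ⟨fun h => hne (by rw [h, hy] at hw'; exact (Option.some_inj.1 hw').symm), ?_⟩
      simpa [hw] using mem_pdom_iff.2 ⟨w', hw'⟩
    · rintro ⟨hne, hC⟩
      obtain ⟨w', hw'⟩ := mem_pdom_iff.1 (show x' ∈ pdom w by simpa [hw])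
      exact ⟨w', hw', fun h => hne (apply_inj w hw' (h ▸ hy))⟩

namespace IsRCrossSection
variable {n : ℕ} {T : Set (IS n)}

theorem eq_of_pdom_eq (hT : IsRCrossSection T) {u v : IS n} (hu : u ∈ T) (hv : v ∈ T)
    (h : pdom u = pdom v) : u = v := by
  obtain ⟨t, -, huniq⟩ := hT.2 u
  rw [huniq u ⟨hu, (greenR_iff u u).2 rfl⟩, huniq v ⟨hv, (greenR_iff u v).2 h⟩]

theorem exists_mem_pdom_eq (hT : IsRCrossSection T) (D : Set (Fin n)) :
    ∃ t ∈ T, pdom t = D := by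
  obtain ⟨t, ⟨ht, hR⟩, -⟩ := hT.2 (PEquiv.ofSet D)
  exact ⟨t, ht, ((greenR_iff _ _).1 hR).symm.trans (pdom_ofSet D)⟩

/-- `u * v` and `u` have the same domain, hence coincide. -/
theorem apply_eq_self_of_pran_subset (hT : IsRCrossSection T) {u v : IS n} (hu : u ∈ T)
    (hv : v ∈ T) (h : pran u ⊆ pdom v) {w : Fin n} (hw : w ∈ pran u) : v w = some w := by
  have huv : u * v = u := by
    refine hT.eq_of_pdom_eq (hT.1 u hu v hv) hu
      (subset_antisymm (pdom_mul_subset u v) fun x hx => ?_)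
    obtain ⟨w', hw'⟩ := mem_pdom_iff.1 hx
    exact mem_pdom_mul_iff.2 ⟨w', hw', h (mem_pran_iff.2 ⟨x, hw'⟩)⟩
  obtain ⟨x, hx⟩ := mem_pran_iff.1 hw
  simpa [hx] using congrArg (· x) huv

theorem one_mem (hT : IsRCrossSection T) : (1 : IS n) ∈ T := by
  obtain ⟨t, ht, htD⟩ := hT.exists_mem_pdom_eq Set.univ
  suffices t = 1 from this ▸ ht
  refine PEquiv.ext fun x => ?_
  obtain ⟨w, hw⟩ := mem_pdom_iff.1 (htD ▸ Set.mem_univ x)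
  have htw := hT.apply_eq_self_of_pran_subset ht ht (htD ▸ Set.subset_univ _)
    (mem_pran_iff.2 ⟨x, hw⟩)
  rw [hw, one_apply, apply_inj t hw htw]

theorem pow_mem (hT : IsRCrossSection T) {u : IS n} (hu : u ∈ T) (k : ℕ) : u ^ k ∈ T := by
  induction k with
  | zero => exact hT.one_mem
  | succ k ih => rw [pow_succ]; exact hT.1 _ ih _ hu

theorem exists_pow_succ_eq (hT : IsRCrossSection T) {u : IS n} (hu : u ∈ T) :
    ∃ i, u ^ (i + 1) = u ^ i := by
  obtain ⟨i, j, hne, hij⟩ := Finite.exists_ne_map_eq_of_infinite (u ^ · : ℕ → IS n)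
  wlog hlt : i < j generalizing i j
  · exact this j i hne.symm hij.symm (by omega)
  refine ⟨i, hT.eq_of_pdom_eq (hT.pow_mem hu _) (hT.pow_mem hu _) (subset_antisymm ?_ ?_)⟩
  · rw [pow_succ]
    exact pdom_mul_subset _ _
  · have hj : u ^ j = u ^ (i + 1) * u ^ (j - (i + 1)) := by rw [← pow_add]; congr 1; omega
    rw [show u ^ i = u ^ j from hij, hj]
    exact pdom_mul_subset _ _

theorem apply_eq_self_of_forall_mem_pdom_pow (hT : IsRCrossSection T) {u : IS n} (hu : u ∈ T)
    {v : Fin n} (h : ∀ t, v ∈ pdom (u ^ t)) : u v = some v := by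
  obtain ⟨i, hi⟩ := hT.exists_pow_succ_eq hu
  obtain ⟨w, hw⟩ := mem_pdom_iff.1 (h (i + 1))
  have hiw : (u ^ i) v = some w := hi ▸ hw
  rw [pow_succ', mul_apply, Option.bind_eq_some_iff] at hw
  obtain ⟨v', hv', hv'w⟩ := hw
  rw [hv', apply_inj _ hv'w hiw]

theorem eq_closure (hT : IsRCrossSection T) {G : Set (IS n)} (hG : G ⊆ T)
    (hdom : ∀ y, ∃ g ∈ G, pdom g = {y}ᶜ) : T = Subsemigroup.closure (G ∪ {1}) := by
  have hle : Subsemigroup.closure (G ∪ {1}) ≤ ⟨T, fun ha hb => hT.1 _ ha _ hb⟩ :=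
    Subsemigroup.closure_le.2 (Set.union_subset hG (Set.singleton_subset_iff.2 hT.one_mem))
  refine subset_antisymm (fun β hβ => ?_) hle
  obtain ⟨w, hw, hwβ⟩ := exists_mem_pdom_eq_of_forall_compl_singleton
    (Subsemigroup.closure (G ∪ {1}))
    (Subsemigroup.subset_closure (Or.inr rfl))
    (fun y => let ⟨g, hg, hgy⟩ := hdom y; ⟨g, Subsemigroup.subset_closure (Or.inl hg), hgy⟩)
    (pdom β)
  rwa [hT.eq_of_pdom_eq hβ (hle hw) hwβ.symm]

/-- These turn out to be the generators `a_{i,j}`. -/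
def gen (hT : IsRCrossSection T) (y : Fin n) : IS n :=
  (hT.exists_mem_pdom_eq {y}ᶜ).choose

theorem gen_mem (hT : IsRCrossSection T) (y : Fin n) : hT.gen y ∈ T :=
  (hT.exists_mem_pdom_eq {y}ᶜ).choose_spec.1

theorem pdom_gen (hT : IsRCrossSection T) (y : Fin n) : pdom (hT.gen y) = {y}ᶜ :=
  (hT.exists_mem_pdom_eq {y}ᶜ).choose_spec.2

theorem gen_self (hT : IsRCrossSection T) (y : Fin n) : hT.gen y y = none :=
  not_mem_pdom_iff.1 (by simp [pdom_gen])

theorem exists_gen_apply_eq_some (hT : IsRCrossSection T) {x y : Fin n} (h : x ≠ y) :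
    ∃ w, hT.gen y x = some w :=
  mem_pdom_iff.1 (by simpa [pdom_gen] using h)

/-- Since `L[0]` is not in the range of `gen y`, the complement of `L` is mapped into itself, so all
powers of `gen y` are defined there and its points are fixed. -/
theorem coe_gen_eq_shiftFun (hT : IsRCrossSection T) {y : Fin n} {L : List (Fin n)}
    (hL : IsChainTo (hT.gen y) L y) (hhead : ∀ x, hT.gen y x ≠ L.head?) :
    ⇑(hT.gen y) = shiftFun L := by
  obtain ⟨hnd, hlast, hstep⟩ := hL
  funext x
  by_cases hx : x ∈ L
  · obtain ⟨i, hi, rfl⟩ := List.getElem_of_mem hx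
    rw [hstep i hi, shiftFun_getElem hnd hi]
  rw [shiftFun_of_not_mem hx]
  have hcompl : ∀ v ∉ L, ∃ w ∉ L, hT.gen y v = some w := by
    intro v hv
    obtain ⟨w, hw⟩ := hT.exists_gen_apply_eq_some (x := v) (y := y) (by
      rintro rfl; exact hv (List.mem_of_getLast? hlast))
    refine ⟨w, fun hwL => ?_, hw⟩
    obtain ⟨_ | j, hj, rfl⟩ := List.getElem_of_mem hwL
    · exact hhead v (by rw [hw, List.head?_eq_getElem?, List.getElem?_eq_getElem hj])
    · have hvj : v = L[j] := apply_inj _ hw (by rw [hstep j _, List.getElem?_eq_getElem hj])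
      exact hv (hvj ▸ List.getElem_mem _)
  have hpow : ∀ t, ∃ w ∉ L, (hT.gen y ^ t) x = some w := by
    intro t
    induction t with
    | zero => exact ⟨x, hx, rfl⟩
    | succ t ih =>
      obtain ⟨w, hw, hxw⟩ := ih
      obtain ⟨w', hw', hww'⟩ := hcompl w hw
      exact ⟨w', hw', by rw [pow_succ, mul_apply, hxw, Option.bind_some, hww']⟩
  exact hT.apply_eq_self_of_forall_mem_pdom_pow (hT.gen_mem y) fun t =>
    let ⟨w, _, h⟩ := hpow t; mem_pdom_iff.2 ⟨w, h⟩

/-- `gen L[k]` fixes the range of `gen y ^ (k + 1)`, which misses exactly `L[0], …, L[k]`. -/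
theorem gen_getElem_apply_of_not_mem_take (hT : IsRCrossSection T) {y : Fin n}
    {L : List (Fin n)} (hL : L.Nodup) (hy : ⇑(hT.gen y) = shiftFun L) {k : ℕ}
    (hk : k < L.length) {x : Fin n} (hx : x ∉ L.take (k + 1)) : hT.gen L[k] x = some x := by
  have hu := hT.pow_mem (hT.gen_mem y) (k + 1)
  refine hT.apply_eq_self_of_pran_subset hu (hT.gen_mem _) (fun w hw => ?_) ?_
  · obtain ⟨x', hx'⟩ := mem_pran_iff.1 hw
    rw [pdom_gen, Set.mem_compl_singleton_iff]
    by_cases hx'L : x' ∈ L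
    · obtain ⟨i, hi, rfl⟩ := List.getElem_of_mem hx'L
      rw [pow_apply_getElem hy hL _ hi, List.getElem?_eq_some_iff] at hx'
      obtain ⟨h, rfl⟩ := hx'
      exact fun heq => absurd (hL.getElem_inj_iff.1 heq) (by omega)
    · rw [pow_apply_of_not_mem hy hx'L, Option.some_inj] at hx'
      exact hx' ▸ fun heq => hx'L (heq ▸ List.getElem_mem hk)
  · rw [mem_pran_iff]
    by_cases hxL : x ∈ L
    · obtain ⟨l, hl, rfl⟩ := List.getElem_of_mem hxL
      have hkl : k < l := by
        by_contra h
        exact hx ((getElem_mem_take_iff hL hl _).2 (by omega))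
      refine ⟨L[l - (k + 1)], ?_⟩
      rw [pow_apply_getElem hy hL _ (by omega), Nat.sub_add_cancel hkl,
        List.getElem?_eq_getElem hl]
    · exact ⟨x, pow_apply_of_not_mem hy hxL _⟩

/-- Both sides lie in `T` and have domain `{L[k], …, L[|L| - 1]}ᶜ`. -/
theorem gen_getElem_mul_pow (hT : IsRCrossSection T) {y : Fin n} {L : List (Fin n)}
    (hL : L.Nodup) (hy : ⇑(hT.gen y) = shiftFun L) {k : ℕ} (hk : k < L.length) :
    hT.gen L[k] * hT.gen y ^ (L.length - 1 - k) = hT.gen y ^ (L.length - k) := by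
  have hfix : ∀ {x}, x ∉ L.take (k + 1) → hT.gen L[k] x = some x :=
    hT.gen_getElem_apply_of_not_mem_take hL hy hk
  refine hT.eq_of_pdom_eq (hT.1 _ (hT.gen_mem _) _ (hT.pow_mem (hT.gen_mem y) _))
    (hT.pow_mem (hT.gen_mem y) _) (Set.ext fun x => ?_)
  rw [mem_pdom_mul_iff, mem_pdom_iff]
  by_cases hxL : x ∈ L
  swap
  · rw [hfix (fun h => hxL (List.mem_of_mem_take h)), pow_apply_of_not_mem hy hxL]
    simp [mem_pdom_iff, pow_apply_of_not_mem hy hxL]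
  obtain ⟨l, hl, rfl⟩ := List.getElem_of_mem hxL
  rw [pow_apply_getElem hy hL _ hl]
  rcases lt_trichotomy l k with hlk | rfl | hkl
  · obtain ⟨w, hw⟩ := hT.exists_gen_apply_eq_some
      (fun h => absurd (hL.getElem_inj_iff.1 h) hlk.ne)
    refine iff_of_true ⟨w, hw, mem_pdom_iff.2 ?_⟩ ⟨_, List.getElem?_eq_getElem (by omega)⟩
    by_cases hwL : w ∈ L
    · obtain ⟨l', hl', rfl⟩ := List.getElem_of_mem hwL
      have hl'k : l' ≤ k := by
        by_contra h
        have hfixed := hfix (fun hmem => by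
          rw [getElem_mem_take_iff hL hl'] at hmem; omega)
        exact absurd (hL.getElem_inj_iff.1 (apply_inj _ hw hfixed)) (by omega)
      exact ⟨_, (pow_apply_getElem hy hL _ hl').trans (List.getElem?_eq_getElem (by omega))⟩
    · exact ⟨w, pow_apply_of_not_mem hy hwL _⟩
  · refine iff_of_false ?_ ?_
    · rintro ⟨w, hw, -⟩
      rw [hT.gen_self] at hw
      cases hw
    · rw [List.getElem?_eq_none (by omega)]
      simp
  · rw [hfix (by rw [getElem_mem_take_iff hL hl]; omega), List.getElem?_eq_none (by omega)]
    simp [mem_pdom_iff, pow_apply_getElem hy hL _ hl,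
      List.getElem?_eq_none (by omega : L.length ≤ l + (L.length - 1 - k))]

theorem coe_gen_getElem (hT : IsRCrossSection T) {y : Fin n} {L : List (Fin n)} (hL : L.Nodup)
    (hy : ⇑(hT.gen y) = shiftFun L) {k : ℕ} (hk : k < L.length) :
    ⇑(hT.gen L[k]) = shiftFun (L.take (k + 1)) := by
  have hlow : ∀ l (hl : l < k), hT.gen L[k] L[l] = some L[l + 1] := by
    intro l hl
    have h := congrArg (· L[l]) (hT.gen_getElem_mul_pow hL hy hk)
    obtain ⟨w, hw⟩ := hT.exists_gen_apply_eq_some (x := L[l]) (y := L[k])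
      (fun h => absurd (hL.getElem_inj_iff.1 h) hl.ne)
    rw [mul_apply, show L.length - k = L.length - 1 - k + 1 by omega, pow_succ', mul_apply, hy,
      shiftFun_getElem hL (by omega), List.getElem?_eq_getElem (by omega), Option.bind_some,
      hw, Option.bind_some] at h
    have h' := pow_apply_getElem hy hL (L.length - 1 - k) (i := l + 1) (by omega)
    rw [List.getElem?_eq_getElem (by omega)] at h'
    rw [hw, apply_inj _ (h.trans h') h']
  funext x
  by_cases hx : x ∈ L.take (k + 1)
  · obtain ⟨l, hl, rfl⟩ := List.getElem_of_mem hx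
    have hl' : l < k + 1 := by simp only [List.length_take] at hl; omega
    rw [shiftFun_getElem (hL.sublist (List.take_sublist _ _)) hl, List.getElem_take,
      List.getElem?_take]
    rcases Nat.lt_or_ge l k with h | h
    · rw [hlow l h, if_pos (by omega), List.getElem?_eq_getElem]
    · obtain rfl : l = k := by omega
      rw [hT.gen_self, if_neg (by omega)]
  · rw [shiftFun_of_not_mem hx, hT.gen_getElem_apply_of_not_mem_take hL hy hk hx]

def chain (hT : IsRCrossSection T) (y : Fin n) : List (Fin n) :=
  (exists_isChainTo (hT.gen_self y)).choose

theorem chain_nodup (hT : IsRCrossSection T) (y : Fin n) : (hT.chain y).Nodup :=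
  (exists_isChainTo (hT.gen_self y)).choose_spec.1.1

theorem getLast?_chain (hT : IsRCrossSection T) (y : Fin n) : (hT.chain y).getLast? = some y :=
  (exists_isChainTo (hT.gen_self y)).choose_spec.1.2.1

theorem coe_gen (hT : IsRCrossSection T) (y : Fin n) : ⇑(hT.gen y) = shiftFun (hT.chain y) :=
  hT.coe_gen_eq_shiftFun (exists_isChainTo (hT.gen_self y)).choose_spec.1
    (exists_isChainTo (hT.gen_self y)).choose_spec.2

theorem mem_chain_self (hT : IsRCrossSection T) (y : Fin n) : y ∈ hT.chain y :=
  List.mem_of_getLast? (hT.getLast?_chain y)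

theorem chain_injective (hT : IsRCrossSection T) : Function.Injective hT.chain :=
  fun y z h => Option.some_inj.1 <| (hT.getLast?_chain y).symm.trans (h ▸ hT.getLast?_chain z)

theorem chain_getElem (hT : IsRCrossSection T) (y : Fin n) {k : ℕ}
    (hk : k < (hT.chain y).length) :
    hT.chain (hT.chain y)[k] = (hT.chain y).take (k + 1) :=
  eq_of_shiftFun_eq (hT.chain_nodup _) ((hT.chain_nodup y).sublist (List.take_sublist _ _))
    ((hT.coe_gen _).symm.trans (hT.coe_gen_getElem (hT.chain_nodup y) (hT.coe_gen y) hk))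

theorem chain_prefix_of_mem (hT : IsRCrossSection T) {x y : Fin n} (hx : x ∈ hT.chain y) :
    hT.chain x <+: hT.chain y := by
  obtain ⟨k, hk, rfl⟩ := List.getElem_of_mem hx
  rw [hT.chain_getElem y hk]
  exact List.take_prefix _ _

theorem coe_gen_getElem_chain (hT : IsRCrossSection T) (y : Fin n) {j : ℕ}
    (hj : j < (hT.chain y).length) : ⇑(hT.gen (hT.chain y)[j]) = chainFun (hT.chain y) j := by
  rw [chainFun_eq_shiftFun_take]
  exact hT.coe_gen_getElem (hT.chain_nodup y) (hT.coe_gen y) hj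

theorem pdom_gen_mul_gen (hT : IsRCrossSection T) {b c : Fin n} (h : hT.gen b c = some c) :
    pdom (hT.gen b * hT.gen c) = {b, c}ᶜ := by
  ext x
  simp only [mem_pdom_mul_iff, pdom_gen, Set.mem_compl_iff, Set.mem_insert_iff,
    Set.mem_singleton_iff, not_or]
  constructor
  · rintro ⟨w, hw, hwc⟩
    refine ⟨fun hxb => ?_, fun hxc => hwc ?_⟩
    · rw [hxb, hT.gen_self] at hw
      cases hw
    · rw [hxc, h] at hw
      exact (Option.some_inj.1 hw).symm
  · rintro ⟨hxb, hxc⟩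
    obtain ⟨w, hw⟩ := hT.exists_gen_apply_eq_some hxb
    exact ⟨w, hw, fun hwc => hxc (apply_inj _ hw (hwc ▸ h))⟩

/-- If `b ≠ c`, then `gen b` and `gen c` commute (both products have domain `{b, c}ᶜ`), yet they
send the common predecessor to `b` and to `c`. -/
theorem eq_of_chain_eq_append (hT : IsRCrossSection T) {A : List (Fin n)} (hA : A ≠ [])
    {b c : Fin n} (hb : hT.chain b = A ++ [b]) (hc : hT.chain c = A ++ [c]) : b = c := by
  by_contra hbc
  obtain ⟨A, w, rfl⟩ := (List.eq_nil_or_concat' A).resolve_left hA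
  simp only [List.append_assoc, List.singleton_append] at hb hc
  have hnd : ∀ {b'}, hT.chain b' = A ++ [w, b'] → (A ++ [w, b']).Nodup :=
    fun h => h ▸ hT.chain_nodup _
  have hfix : ∀ {b' c'}, hT.chain b' = A ++ [w, b'] → hT.chain c' = A ++ [w, c'] →
      b' ≠ c' → hT.gen b' c' = some c' := by
    intro b' c' hb' hc' hne
    obtain ⟨-, hwc', hAc'⟩ := List.nodup_append.1 (hnd hc')
    rw [hT.coe_gen, hb', shiftFun_of_not_mem]
    simp only [List.mem_append, List.mem_cons, List.not_mem_nil, or_false, not_or]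
    refine ⟨fun h => hAc' c' h c' (by simp) rfl, fun h => ?_, Ne.symm hne⟩
    simp [h] at hwc'
  have hpred : ∀ {b'}, hT.chain b' = A ++ [w, b'] → hT.gen b' w = some b' := by
    intro b' hb'
    have h := shiftFun_getElem (hnd hb') (i := A.length) (by simp)
    rw [hT.coe_gen, hb']
    simpa using h
  have hcomm : hT.gen b * hT.gen c = hT.gen c * hT.gen b :=
    hT.eq_of_pdom_eq (hT.1 _ (hT.gen_mem b) _ (hT.gen_mem c))
      (hT.1 _ (hT.gen_mem c) _ (hT.gen_mem b))
      (by rw [hT.pdom_gen_mul_gen (hfix hb hc hbc), hT.pdom_gen_mul_gen (hfix hc hb (Ne.symm hbc)),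
        Set.pair_comm])
  have hw := congrArg (· w) hcomm
  simp only [mul_apply, hpred hb, hpred hc, Option.bind_some, hfix hb hc hbc,
    hfix hc hb (Ne.symm hbc), Option.some_inj] at hw
  exact hbc hw

theorem chain_prefix_or_prefix (hT : IsRCrossSection T) {x y z : Fin n} (hy : x ∈ hT.chain y)
    (hz : x ∈ hT.chain z) : hT.chain y <+: hT.chain z ∨ hT.chain z <+: hT.chain y := by
  obtain ⟨i, hi, rfl⟩ := List.getElem_of_mem hy
  obtain ⟨j, hj, hji⟩ := List.getElem_of_mem hz
  have hbase := (hT.chain_getElem y hi).symm.trans (hji ▸ hT.chain_getElem z hj)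
  obtain rfl : j = i := by
    have := congrArg List.length hbase
    simp only [List.length_take] at this
    omega
  refine prefix_or_prefix_of_take_eq hi hj hbase fun p hp hpA hpB h => ?_
  have hA := hT.chain_getElem y hpA
  have hB := hT.chain_getElem z hpB
  rw [List.take_succ_eq_append_getElem hpA] at hA
  rw [List.take_succ_eq_append_getElem hpB, ← h] at hB
  exact hT.eq_of_chain_eq_append
    (List.ne_nil_of_length_pos (by rw [List.length_take]; omega)) hA hB

def tops (hT : IsRCrossSection T) : Finset (Fin n) :=
  {t | ∀ z, t ∈ hT.chain z → z = t}

theorem exists_mem_tops_mem_chain (hT : IsRCrossSection T) (x : Fin n) :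
    ∃ t ∈ hT.tops, x ∈ hT.chain t := by
  obtain ⟨t, ht, hmax⟩ := Finset.exists_max_image {z | x ∈ hT.chain z}
    (fun z => (hT.chain z).length) ⟨x, by simp [mem_chain_self]⟩
  rw [Finset.mem_filter] at ht
  refine ⟨t, Finset.mem_filter.2 ⟨Finset.mem_univ _, fun z hz => ?_⟩, ht.2⟩
  have hpre := hT.chain_prefix_of_mem hz
  have hle := hmax z (Finset.mem_filter.2 ⟨Finset.mem_univ _, hpre.subset ht.2⟩)
  exact hT.chain_injective (hpre.eq_of_length_le hle).symm

theorem eq_of_mem_chain_of_mem_tops (hT : IsRCrossSection T) {t t' x : Fin n}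
    (ht : t ∈ hT.tops) (ht' : t' ∈ hT.tops) (hx : x ∈ hT.chain t) (hx' : x ∈ hT.chain t') :
    t = t' := by
  rcases hT.chain_prefix_or_prefix hx hx' with h | h
  · exact ((Finset.mem_filter.1 ht).2 t' (h.subset (hT.mem_chain_self t))).symm
  · exact (Finset.mem_filter.1 ht').2 t (h.subset (hT.mem_chain_self t'))

def orderedPartition (hT : IsRCrossSection T) : OrderedPartition n hT.tops.card where
  B i := hT.chain (hT.tops.equivFin.symm i)
  nonempty _ := List.ne_nil_of_mem (hT.mem_chain_self _)
  nodup _ := hT.chain_nodup _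
  disjoint _ _ hij _ hi hj := hij <| hT.tops.equivFin.symm.injective <| Subtype.ext <|
    hT.eq_of_mem_chain_of_mem_tops (Subtype.prop _) (Subtype.prop _) hi hj
  cover x :=
    let ⟨t, ht, hx⟩ := hT.exists_mem_tops_mem_chain x
    ⟨hT.tops.equivFin ⟨t, ht⟩, by simpa using hx⟩

end IsRCrossSection

/-- every R-cross-section of `IS n` is of the form `R(M⃗₁, …, M⃗ₛ)` for some
decomposition of `Fin n` into nonempty blocks with linear orders on the blocks. -/
theorem rcross_eq_rsec (n : ℕ) (T : Set (IS n)) (hT : IsRCrossSection T) :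
    ∃ (s : ℕ) (P : OrderedPartition n s), T = RSec P.B := by
  refine ⟨_, hT.orderedPartition, hT.eq_closure ?_ fun y => ?_⟩
  · rintro a ⟨i, j, hj, ha⟩
    have : a = hT.gen (hT.orderedPartition.B i)[j] :=
      PEquiv.ext fun x => (ha x).trans (congrFun (hT.coe_gen_getElem_chain _ hj) x).symm
    exact this ▸ hT.gen_mem _
  · obtain ⟨i, hy⟩ := hT.orderedPartition.cover y
    obtain ⟨j, hj, rfl⟩ := List.getElem_of_mem hy
    exact ⟨_, ⟨i, j, hj, congrFun (hT.coe_gen_getElem_chain _ hj)⟩, hT.pdom_gen _⟩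

end ISW
end
end

section
/- Let R = R(M⃗) be a single-block R-cross-section of IS_n, corresponding to the trivial decomposition N_n = M with linear order M = {m_1 < m_2 < … < m_n}. Then for every nonempty subset {m_{j_1}, …, m_{j_k}} of M with j_1 < … < j_k, the unique element a ∈ R with dom(a) = {m_{j_1}, …, m_{j_k}} acts by m_{j_l}·a = m_{n−k+l} for l = 1, …, k. -/
open scoped Classical

noncomputable section
theorem List.Nodup.mem_of_length_eq_card {α : Type*} [Fintype α] {L : List α}
    (hnd : L.Nodup) (hlen : L.length = Fintype.card α) (x : α) : x ∈ L := by
  classical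
  have huniv : L.toFinset = Finset.univ :=
    Finset.eq_univ_of_card _ (by rw [List.toFinset_card_of_nodup hnd, hlen])
  simpa [huniv] using L.mem_toFinset (a := x)

theorem StrictMono.val_add_eq_of_isUpperSet_range {k n : ℕ} {ψ : Fin k → Fin n}
    (hψ : StrictMono ψ) (hup : IsUpperSet (Set.range ψ)) (l : Fin k) :
    (ψ l : ℕ) + k = n + l := by
  have himage : (Finset.Ici l).image ψ = Finset.Ici (ψ l) := by
    ext p
    simp only [Finset.mem_image, Finset.mem_Ici]
    constructor
    · rintro ⟨l', hl', rfl⟩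
      exact hψ.monotone hl'
    · intro hp
      obtain ⟨l', rfl⟩ := hup hp ⟨l, rfl⟩
      exact ⟨l', hψ.le_iff_le.mp hp, rfl⟩
  have hcard := congrArg Finset.card himage
  rw [Finset.card_image_of_injective _ hψ.injective, Fin.card_Ici, Fin.card_Ici] at hcard
  have := l.isLt
  have := (ψ l).isLt
  omega

namespace PEquiv

variable {α β : Type*} [LinearOrder β]

structure IsTopAligned (κ : α → β) (a : α ≃. α) : Prop where
  lt_of_lt : ∀ {x x' y y'}, y ∈ a x → y' ∈ a x' → κ x < κ x' → κ y < κ y'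
  mem_ran_of_le : ∀ {x y y'}, y ∈ a x → κ y ≤ κ y' → ∃ x', y' ∈ a x'

theorem isTopAligned_refl (κ : α → β) : IsTopAligned κ (PEquiv.refl α) where
  lt_of_lt hy hy' h := by simp_all
  mem_ran_of_le _ _ := ⟨_, rfl⟩

theorem IsTopAligned.trans {κ : α → β} {a b : α ≃. α} (ha : IsTopAligned κ a)
    (hb : IsTopAligned κ b) : IsTopAligned κ (a.trans b) where
  lt_of_lt hz hz' h := by
    obtain ⟨y, hy, hz⟩ := (mem_trans _ _ _ _).mp hz
    obtain ⟨y', hy', hz'⟩ := (mem_trans _ _ _ _).mp hz'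
    exact hb.lt_of_lt hz hz' (ha.lt_of_lt hy hy' h)
  mem_ran_of_le {x z z'} hz h := by
    obtain ⟨y, hy, hz⟩ := (mem_trans _ _ _ _).mp hz
    obtain ⟨y', hz'⟩ := hb.mem_ran_of_le hz h
    have hyy' : κ y ≤ κ y' := le_of_not_gt fun hlt => (hb.lt_of_lt hz' hz hlt).not_ge h
    obtain ⟨x', hy'⟩ := ha.mem_ran_of_le hy hyy'
    exact ⟨x', (mem_trans _ _ _ _).mpr ⟨y', hy', hz'⟩⟩

theorem IsTopAligned.val_add_eq {n k : ℕ} {κ : α → Fin n} {a : α ≃. α}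
    (ha : IsTopAligned κ a) (hκ : Function.Surjective κ) {x : Fin k → α}
    (hx : StrictMono (κ ∘ x)) (hdom : ∀ z, (a z).isSome ↔ z ∈ Set.range x)
    (l : Fin k) {y : α} (hy : y ∈ a (x l)) : (κ y : ℕ) + k = n + l := by
  have hdef : ∀ l, ∃ y, y ∈ a (x l) := fun l =>
    Option.isSome_iff_exists.mp ((hdom _).mpr ⟨l, rfl⟩)
  choose y' hy' using hdef
  have hψ : StrictMono (κ ∘ y') := fun l l' h => ha.lt_of_lt (hy' l) (hy' l') (hx h)
  have hup : IsUpperSet (Set.range (κ ∘ y')) := by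
    rintro p p' hpp' ⟨l, rfl⟩
    obtain ⟨z, rfl⟩ := hκ p'
    obtain ⟨x', hx'⟩ := ha.mem_ran_of_le (hy' l) hpp'
    obtain ⟨l', rfl⟩ := (hdom x').mp (Option.isSome_iff_exists.mpr ⟨_, hx'⟩)
    exact ⟨l', congrArg κ (Option.mem_unique (hy' l') hx')⟩
  rw [Option.mem_unique hy (hy' l)]
  exact hψ.val_add_eq_of_isUpperSet_range hup l

end PEquiv

namespace ISW

open PEquiv

section Chain

variable {n : ℕ} {L : List (Fin n)} {j : ℕ}

theorem idxOf_of_chainFun_eq_some (hnd : L.Nodup) (hj : j < L.length) {x y : Fin n}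
    (h : chainFun L j x = some y) :
    L.idxOf x ≠ j ∧ L.idxOf y = if L.idxOf x < j then L.idxOf x + 1 else L.idxOf x := by
  unfold chainFun at h
  by_cases hx : x ∈ L
  · have hxlt := List.idxOf_lt_length_of_mem hx
    rw [if_pos hx] at h
    split_ifs at h with hxj hlt
    · obtain ⟨hlen, rfl⟩ := List.getElem?_eq_some_iff.mp h
      exact ⟨hxj, by rw [if_pos hlt, hnd.idxOf_getElem]⟩
    · cases h
      exact ⟨hxj, (if_neg hlt).symm⟩
  · rw [if_neg hx] at h
    cases h
    have hlen := List.idxOf_eq_length_iff.mpr hx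
    exact ⟨by omega, by rw [if_neg (by omega)]⟩

theorem isTopAligned_of_chainFun (hnd : L.Nodup) (hj : j < L.length) {a : IS n}
    (ha : ∀ x, a x = chainFun L j x) : IsTopAligned L.idxOf a where
  lt_of_lt hy hy' h := by
    obtain ⟨hxj, hy⟩ := idxOf_of_chainFun_eq_some hnd hj ((ha _).symm.trans hy)
    obtain ⟨hxj', hy'⟩ := idxOf_of_chainFun_eq_some hnd hj ((ha _).symm.trans hy')
    rw [hy, hy']
    split_ifs <;> omega
  mem_ran_of_le {x y y'} hy h := by
    obtain ⟨hxj, hy⟩ := idxOf_of_chainFun_eq_some hnd hj ((ha _).symm.trans hy)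
    by_cases hy'L : y' ∈ L ∧ L.idxOf y' ≤ j
    · -- positions `1, …, j` are the images of their predecessors
      obtain ⟨hy'L, hy'j⟩ := hy'L
      have hpos : 0 < L.idxOf y' := by split_ifs at hy <;> omega
      have hlt : L.idxOf y' - 1 < L.length := by omega
      refine ⟨L[L.idxOf y' - 1], ?_⟩
      rw [ha, chainFun, if_pos (List.getElem_mem hlt), hnd.idxOf_getElem,
        if_neg (by omega), if_pos (by omega), Nat.sub_add_cancel hpos,
        List.getElem?_eq_getElem (List.idxOf_lt_length_of_mem hy'L), List.getElem_idxOf]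
      rfl
    · have hy'j : y' ∈ L → j < L.idxOf y' := fun hy'L' => by
        have := not_and.mp hy'L hy'L'
        omega
      refine ⟨y', ?_⟩
      rw [ha, chainFun]
      split_ifs with hy'L' <;> first | rfl | (have := hy'j hy'L'; omega)

theorem isTopAligned_of_mem_RSec (hnd : L.Nodup) {a : IS n}
    (ha : a ∈ RSec (fun _ : Fin 1 => L)) : IsTopAligned L.idxOf a := by
  induction ha using Subsemigroup.closure_induction with
  | mem x hx =>
    rcases hx with hx | hx
    · obtain ⟨_, i, hi, hchain⟩ := hx
      exact isTopAligned_of_chainFun hnd hi hchain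
    · rw [Set.mem_singleton_iff.mp hx]
      exact isTopAligned_refl _
  | mul x y _ _ hx hy => exact hx.trans hy

end Chain

/-- for the single-block R-cross-section `R(M⃗)` of `IS n` with
`M = {m_1 < … < m_n}` listed by `L` (0-based indexing), the unique element `a ∈ R` with
domain `{m_{j_1}, …, m_{j_k}}` (`j` strictly increasing) acts by `m_{j_l} · a = m_{n-k+l}`. -/
theorem single_block_action (n : ℕ) (L : List (Fin n)) (hnd : L.Nodup) (hlen : L.length = n)
    (k : ℕ) (j : Fin k → Fin n) (hj : StrictMono j)
    (a : IS n) (ha : a ∈ RSec (fun _ : Fin 1 => L))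
    (hdom : pdom a = {x : Fin n | ∃ l : Fin k, x = L[(j l : ℕ)]'(by rw [hlen]; exact (j l).isLt)}) :
    ∀ l : Fin k, ∀ h : n - k + (l : ℕ) < n,
      a (L[(j l : ℕ)]'(by rw [hlen]; exact (j l).isLt)) =
        some (L[n - k + (l : ℕ)]'(by omega)) := by
  intro l h
  have hmem := hnd.mem_of_length_eq_card (by simpa using hlen)
  let κ : Fin n → Fin n := fun x =>
    ⟨L.idxOf x, (List.idxOf_lt_length_of_mem (hmem x)).trans_eq hlen⟩
  have hκ : ∀ p : Fin n, κ (L[(p : ℕ)]'(by omega)) = p := fun p =>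
    Fin.ext (hnd.idxOf_getElem _ _)
  have hT : IsTopAligned κ a :=
    let hidx := isTopAligned_of_mem_RSec hnd ha
    ⟨hidx.lt_of_lt, hidx.mem_ran_of_le⟩
  have hl : L[(j l : ℕ)]'(by rw [hlen]; exact (j l).isLt) ∈ pdom a := by
    rw [hdom]
    exact ⟨l, rfl⟩
  obtain ⟨y, hy⟩ := Option.isSome_iff_exists.mp hl
  have hval := hT.val_add_eq (fun p => ⟨_, hκ p⟩)
    (x := fun l => L[(j l : ℕ)]'(by rw [hlen]; exact (j l).isLt))
    (by simpa only [Function.comp_def, hκ] using hj)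
    (fun z => (Set.ext_iff.mp hdom z).trans (by simp [eq_comm])) l hy
  have hkn : k ≤ n := by simpa using Fintype.card_le_of_injective j hj.injective
  rw [hy, ← List.getElem_idxOf (List.idxOf_lt_length_of_mem (hmem y))]
  congr 2
  simp only [κ] at hval
  omega

end ISW
end
end
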